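/- arXiv:2509.11064 — 2 statements merged into one kernel-verified Lean document; each statement's English description precedes it below -/
import Mathlib

section
/- Let m > 0, v ∈ ℝ³, v⁰ = √(m² + ‖v‖²), v̂ = v/v⁰, let ω ∈ ℝ³ be a unit vector, and fix i ∈ {1,2,3}. Then |ωᵢ + v̂ᵢ|·‖ω − (ω·v̂)v̂‖/(v⁰(1 + v̂·ω)²) ≤ 3√(m² + ‖v‖²)/m². -/
/-!
Write `u = 1 + v̂·ω` and `p = 1 - ‖v̂‖² = m²/v⁰²`. For a unit vector `ω`,
`‖ω + v̂‖² = 2u - p` and `‖ω - (ω·v̂)v̂‖² ≤ 1 - (ω·v̂)² ≤ 2u`, and `p > 0` forces `u > 0`.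
With `a = ‖ω + v̂‖`, `b = ‖ω - (ω·v̂)v̂‖`, AM-GM `(2u - p)p ≤ u²` and `p ≤ 2u` give
`(abp)² = (a²p)(b²p) ≤ 4u⁴`, so `|ωᵢ + v̂ᵢ|·b·p ≤ 2u²`; multiplying by `v⁰²` and using
`v⁰²p = m²` yields the claim, even with constant 2.
-/

local notation "⟪" x ", " y "⟫" => @inner ℝ _ _ x y

theorem mul_mul_le_two_mul_sq_of_sq_add_eq {a b p u : ℝ} (ha : 0 ≤ a) (hb : 0 ≤ b)
    (hp : 0 ≤ p) (ha_sq : a ^ 2 + p = 2 * u) (hb_sq : b ^ 2 ≤ 2 * u) :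
    a * b * p ≤ 2 * u ^ 2 := by
  have hap : a ^ 2 * p ≤ u ^ 2 := by nlinarith [sq_nonneg (u - p)]
  have hbp : b ^ 2 * p ≤ (2 * u) ^ 2 := by nlinarith [sq_nonneg a]
  refine (pow_le_pow_iff_left₀ (by positivity) (by positivity) two_ne_zero).1 ?_
  calc (a * b * p) ^ 2 = (a ^ 2 * p) * (b ^ 2 * p) := by ring
    _ ≤ u ^ 2 * (2 * u) ^ 2 := mul_le_mul hap hbp (by positivity) (by positivity)
    _ = (2 * u ^ 2) ^ 2 := by ring

section InnerProductSpace

variable {E : Type*} [NormedAddCommGroup E] [InnerProductSpace ℝ E] {ω w : E}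

theorem norm_add_sq_add_one_sub_norm_sq (hω : ‖ω‖ = 1) :
    ‖ω + w‖ ^ 2 + (1 - ‖w‖ ^ 2) = 2 * (1 + ⟪w, ω⟫) := by
  rw [norm_add_sq_real, hω, real_inner_comm]
  ring

theorem norm_sub_inner_smul_sq_le (hω : ‖ω‖ = 1) (hw : ‖w‖ ≤ 1) :
    ‖ω - ⟪ω, w⟫ • w‖ ^ 2 ≤ 2 * (1 + ⟪w, ω⟫) := by
  have hw_sq : ‖w‖ ^ 2 ≤ 1 := pow_le_one₀ (norm_nonneg w) hw
  rw [norm_sub_sq_real, real_inner_smul_right, norm_smul, hω, Real.norm_eq_abs, mul_pow, sq_abs,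
    real_inner_comm w]
  nlinarith [sq_nonneg (1 + ⟪w, ω⟫), mul_le_mul_of_nonneg_left hw_sq (sq_nonneg ⟪w, ω⟫)]

end InnerProductSpace

theorem sq_mul_one_sub_norm_inv_smul_sq {E : Type*} [NormedAddCommGroup E] [NormedSpace ℝ E]
    {m : ℝ} (hm : m ≠ 0) (v : E) :
    √(m ^ 2 + ‖v‖ ^ 2) ^ 2 * (1 - ‖(√(m ^ 2 + ‖v‖ ^ 2))⁻¹ • v‖ ^ 2) = m ^ 2 := by
  have h : 0 < √(m ^ 2 + ‖v‖ ^ 2) := by positivity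
  rw [norm_smul, norm_inv, Real.norm_of_nonneg h.le, mul_pow, inv_pow, Real.sq_sqrt (by positivity)]
  field_simp
  ring

/-- With `v⁰ = √(m² + ‖v‖²)`, `v̂ = v/v⁰`, `ω` a unit vector and
`i ∈ {1,2,3}`, the second piece of the velocity gradient of the Glassey–Strauss electric
kernel satisfies `|ωᵢ + v̂ᵢ|·‖ω − (ω·v̂)v̂‖/(v⁰(1 + v̂·ω)²) ≤ 3√(m² + ‖v‖²)/m²`. -/
theorem aE_second_piece_bound
    (m : ℝ) (hm : 0 < m) (v ω : EuclideanSpace ℝ (Fin 3)) (hω : ‖ω‖ = 1)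
    (v0 : ℝ) (hv0 : v0 = Real.sqrt (m ^ 2 + ‖v‖ ^ 2))
    (vhat : EuclideanSpace ℝ (Fin 3)) (hvhat : vhat = v0⁻¹ • v) (i : Fin 3) :
    |ω i + vhat i| * ‖ω - ⟪ω, vhat⟫ • vhat‖ / (v0 * (1 + ⟪vhat, ω⟫) ^ 2) ≤
      3 * Real.sqrt (m ^ 2 + ‖v‖ ^ 2) / m ^ 2 := by
  have hv0_pos : 0 < v0 := hv0 ▸ by positivity
  have hmass : v0 ^ 2 * (1 - ‖vhat‖ ^ 2) = m ^ 2 := by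
    rw [hvhat, hv0]; exact sq_mul_one_sub_norm_inv_smul_sq hm.ne' v
  have hp_pos : 0 < 1 - ‖vhat‖ ^ 2 := pos_of_mul_pos_right (hmass ▸ by positivity) (sq_nonneg v0)
  have hvhat_le : ‖vhat‖ ≤ 1 := by nlinarith [norm_nonneg vhat]
  have hsum := norm_add_sq_add_one_sub_norm_sq (w := vhat) hω
  have hu_pos : 0 < 1 + ⟪vhat, ω⟫ := by nlinarith [sq_nonneg ‖ω + vhat‖]
  have hcoord : |ω i + vhat i| ≤ ‖ω + vhat‖ := PiLp.norm_apply_le (ω + vhat) i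
  have hprod := mul_mul_le_two_mul_sq_of_sq_add_eq (norm_nonneg _) (norm_nonneg _) hp_pos.le hsum
    (norm_sub_inner_smul_sq_le hω hvhat_le)
  rw [← hv0, div_le_div_iff₀ (by positivity) (by positivity), ← hmass]
  have hbound : |ω i + vhat i| * ‖ω - ⟪ω, vhat⟫ • vhat‖ * (1 - ‖vhat‖ ^ 2) ≤
      2 * (1 + ⟪vhat, ω⟫) ^ 2 :=
    (mul_le_mul_of_nonneg_right (mul_le_mul_of_nonneg_right hcoord (norm_nonneg _)) hp_pos.le).trans
      hprod
  nlinarith [mul_le_mul_of_nonneg_left hbound (sq_nonneg v0)]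
end

section
/- Fix m > 0 and Y ∈ ℝ³ with Y ≠ 0. Define F : ℝ³ → ℝ³ by F(v) = (Y/‖Y‖²) × (v̂/(1 + v̂·(Y/‖Y‖))) = (Y × v)/(‖Y‖²√(m² + ‖v‖²) + ‖Y‖(Y·v)), where v̂ = v/√(m² + ‖v‖²). Then the denominator ‖Y‖²√(m² + ‖v‖²) + ‖Y‖(Y·v) is strictly positive for every v, the map F is differentiable on ℝ³, and F is divergence-free: ∑_{i=1}^{3} ∂Fᵢ/∂vᵢ(v) = 0 for every v ∈ ℝ³. -/
/-!
Write `F = g⁻¹ • (Y × ·)` with `g v = ‖Y‖²√(m² + ‖v‖²) + ‖Y‖⟪Y, v⟫`. By the product rule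
`div (φ • A) = ⟪∇φ, A⟫ + φ div A`. The linear field `v ↦ Y × v` has zero diagonal, so it is
divergence-free, and `∇(g⁻¹)` is a combination of `v` and `Y`, both orthogonal to `Y × v`.
Positivity of `g` is Cauchy–Schwarz: `|⟪Y, v⟫| ≤ ‖Y‖‖v‖ < ‖Y‖√(m² + ‖v‖²)` since `m ≠ 0`.
-/

noncomputable section

local notation "⟪" x ", " y "⟫" => @inner ℝ _ _ x y

/-- The cross product on `ℝ³` (Euclidean). -/
noncomputable def cross3 (a b : EuclideanSpace ℝ (Fin 3)) : EuclideanSpace ℝ (Fin 3) :=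
  (WithLp.equiv 2 (Fin 3 → ℝ)).symm
    ![a 1 * b 2 - a 2 * b 1, a 2 * b 0 - a 0 * b 2, a 0 * b 1 - a 1 * b 0]

section Divergence

variable {ι : Type*} [Fintype ι] [DecidableEq ι]

def divergence (A : EuclideanSpace ℝ ι → EuclideanSpace ℝ ι) (v : EuclideanSpace ℝ ι) : ℝ :=
  ∑ i, fderiv ℝ (fun u => A u i) v (EuclideanSpace.single i 1)

theorem divergence_continuousLinearMap (L : EuclideanSpace ℝ ι →L[ℝ] EuclideanSpace ℝ ι)
    (v : EuclideanSpace ℝ ι) : divergence L v = ∑ i, L (EuclideanSpace.single i 1) i := by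
  refine Finset.sum_congr rfl fun i _ => ?_
  rw [show (fun u => L u i) = (EuclideanSpace.proj i).comp L from rfl,
    ContinuousLinearMap.fderiv]
  rfl

theorem divergence_smul {φ : EuclideanSpace ℝ ι → ℝ} {φ' : EuclideanSpace ℝ ι →L[ℝ] ℝ}
    {A : EuclideanSpace ℝ ι → EuclideanSpace ℝ ι} {v : EuclideanSpace ℝ ι}
    (hφ : HasFDerivAt φ φ' v) (hA : DifferentiableAt ℝ A v) :
    divergence (fun u => φ u • A u) v = φ' (A v) + φ v * divergence A v := by
  have hAi := differentiableAt_euclidean.mp hA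
  have hexpand : ∑ i, A v i • EuclideanSpace.single i (1 : ℝ) = A v := by
    simpa [EuclideanSpace.basisFun_apply] using (EuclideanSpace.basisFun ι ℝ).sum_repr (A v)
  calc divergence (fun u => φ u • A u) v
      = ∑ i, (φ v * fderiv ℝ (fun u => A u i) v (EuclideanSpace.single i 1)
          + A v i * φ' (EuclideanSpace.single i 1)) := by
        refine Finset.sum_congr rfl fun i _ => ?_
        simp only [PiLp.smul_apply, smul_eq_mul]
        have h : HasFDerivAt (fun u => φ u * A u i)
            (φ v • fderiv ℝ (fun u => A u i) v + A v i • φ') v := hφ.mul (hAi i).hasFDerivAt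
        rw [h.fderiv]
        simp only [add_apply, smul_apply, smul_eq_mul]
    _ = φ' (A v) + φ v * divergence A v := by
        rw [Finset.sum_add_distrib, add_comm, divergence, Finset.mul_sum]
        congr 1
        conv_rhs => rw [← hexpand]
        simp [map_sum, map_smul]

end Divergence

theorem cross3_eq_crossProduct (a b : EuclideanSpace ℝ (Fin 3)) :
    cross3 a b = WithLp.toLp 2 (crossProduct a.ofLp b.ofLp) := rfl

theorem inner_self_cross3 (a b : EuclideanSpace ℝ (Fin 3)) : ⟪a, cross3 a b⟫ = 0 := by
  rw [cross3_eq_crossProduct, EuclideanSpace.inner_eq_star_dotProduct, star_trivial,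
    dotProduct_comm]
  exact dot_self_cross _ _

theorem inner_cross3_self (a b : EuclideanSpace ℝ (Fin 3)) : ⟪b, cross3 a b⟫ = 0 := by
  rw [cross3_eq_crossProduct, EuclideanSpace.inner_eq_star_dotProduct, star_trivial,
    dotProduct_comm]
  exact dot_cross_self _ _

def cross3CLM (a : EuclideanSpace ℝ (Fin 3)) :
    EuclideanSpace ℝ (Fin 3) →L[ℝ] EuclideanSpace ℝ (Fin 3) :=
  ((WithLp.linearEquiv 2 ℝ (Fin 3 → ℝ)).symm.toLinearMap ∘ₗ crossProduct a.ofLp ∘ₗ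
    (WithLp.linearEquiv 2 ℝ (Fin 3 → ℝ)).toLinearMap).toContinuousLinearMap

theorem cross3CLM_apply (a b : EuclideanSpace ℝ (Fin 3)) : cross3CLM a b = cross3 a b := rfl

theorem cross3_smul_right (a b : EuclideanSpace ℝ (Fin 3)) (c : ℝ) :
    cross3 a (c • b) = c • cross3 a b :=
  (cross3CLM a).map_smul c b

theorem divergence_cross3 (a v : EuclideanSpace ℝ (Fin 3)) : divergence (cross3 a) v = 0 := by
  refine (divergence_continuousLinearMap (cross3CLM a) v).trans ?_
  simp [Fin.sum_univ_three, cross3CLM_apply, cross3]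

theorem norm_mul_sqrt_add_inner_pos {E : Type*} [NormedAddCommGroup E] [InnerProductSpace ℝ E]
    {m : ℝ} (hm : m ≠ 0) {Y : E} (hY : Y ≠ 0) (v : E) :
    0 < ‖Y‖ * √(m ^ 2 + ‖v‖ ^ 2) + ⟪Y, v⟫ := by
  have hv : ‖v‖ < √(m ^ 2 + ‖v‖ ^ 2) :=
    (Real.lt_sqrt (norm_nonneg v)).mpr (lt_add_of_pos_left _ (by positivity))
  have hCS : -⟪Y, v⟫ ≤ ‖Y‖ * ‖v‖ := (neg_le_abs _).trans (abs_real_inner_le_norm Y v)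
  nlinarith [mul_lt_mul_of_pos_left hv (norm_pos_iff.mpr hY)]

section Denominator

variable {E : Type*} [NormedAddCommGroup E] [InnerProductSpace ℝ E] (m : ℝ) (Y : E)

def kernelDenom (u : E) : ℝ := ‖Y‖ ^ 2 * √(m ^ 2 + ‖u‖ ^ 2) + ‖Y‖ * ⟪Y, u⟫

variable {m Y}

theorem kernelDenom_pos (hm : m ≠ 0) (hY : Y ≠ 0) (v : E) : 0 < kernelDenom m Y v := by
  have h : kernelDenom m Y v = ‖Y‖ * (‖Y‖ * √(m ^ 2 + ‖v‖ ^ 2) + ⟪Y, v⟫) := by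
    unfold kernelDenom; ring
  rw [h]
  exact mul_pos (norm_pos_iff.mpr hY) (norm_mul_sqrt_add_inner_pos hm hY v)

theorem hasFDerivAt_kernelDenom (hm : m ≠ 0) (v : E) :
    HasFDerivAt (kernelDenom m Y)
      (innerSL ℝ ((‖Y‖ ^ 2 / √(m ^ 2 + ‖v‖ ^ 2)) • v + ‖Y‖ • Y)) v := by
  have hq : m ^ 2 + ‖v‖ ^ 2 ≠ 0 := by positivity
  have hsqrt := (Real.hasDerivAt_sqrt hq).comp_hasFDerivAt v
    (((hasFDerivAt_id v).norm_sq).const_add (m ^ 2))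
  refine HasFDerivAt.congr_fderiv (f := kernelDenom m Y)
    ((hsqrt.const_mul (‖Y‖ ^ 2)).add (((innerSL ℝ Y).hasFDerivAt (x := v)).const_mul ‖Y‖)) ?_
  ext w
  simp
  field_simp

theorem inv_kernelDenom_eq (hm : m ≠ 0) (hY : Y ≠ 0) (v : E) :
    (kernelDenom m Y v)⁻¹ = (‖Y‖ ^ 2)⁻¹ *
      (1 + ⟪(√(m ^ 2 + ‖v‖ ^ 2))⁻¹ • v, ‖Y‖⁻¹ • Y⟫)⁻¹ * (√(m ^ 2 + ‖v‖ ^ 2))⁻¹ := by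
  have hs : √(m ^ 2 + ‖v‖ ^ 2) ≠ 0 := by positivity
  have hYn := (norm_pos_iff.mpr hY).ne'
  have hpos := (norm_mul_sqrt_add_inner_pos hm hY v).ne'
  rw [real_inner_smul_left, real_inner_smul_right, real_inner_comm, kernelDenom]
  field_simp

end Denominator

theorem divergence_inv_kernelDenom_smul_cross3 {m : ℝ} (hm : m ≠ 0)
    {Y : EuclideanSpace ℝ (Fin 3)} (hY : Y ≠ 0) (v : EuclideanSpace ℝ (Fin 3)) :
    divergence (fun u => (kernelDenom m Y u)⁻¹ • cross3 Y u) v = 0 := by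
  have hφ : HasFDerivAt (fun u => (kernelDenom m Y u)⁻¹) _ v :=
    (hasDerivAt_inv (kernelDenom_pos hm hY v).ne').comp_hasFDerivAt v
      (hasFDerivAt_kernelDenom hm v)
  rw [divergence_smul (A := cross3 Y) hφ (cross3CLM Y).differentiableAt, divergence_cross3]
  simp [inner_self_cross3, inner_cross3_self]

/-- Fix `m > 0` and `Y ≠ 0`. Define
`F(v) = (Y/‖Y‖²) × (v̂/(1 + v̂·(Y/‖Y‖))) = (Y × v)/(‖Y‖²√(m² + ‖v‖²) + ‖Y‖(Y·v))`, with
`v̂ = v/√(m² + ‖v‖²)`. Then the denominator is strictly positive, the two displayed forms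
of `F` agree, `F` is differentiable on `ℝ³`, and `F` is divergence-free:
`∑ᵢ ∂Fᵢ/∂vᵢ(v) = 0` for every `v`. -/
theorem magnetic_kernel_divergence_free
    (m : ℝ) (hm : 0 < m) (Y : EuclideanSpace ℝ (Fin 3)) (hY : Y ≠ 0)
    (F : EuclideanSpace ℝ (Fin 3) → EuclideanSpace ℝ (Fin 3))
    (hF : ∀ v, F v =
      (‖Y‖ ^ 2 * Real.sqrt (m ^ 2 + ‖v‖ ^ 2) + ‖Y‖ * ⟪Y, v⟫)⁻¹ • cross3 Y v) :
    (∀ v : EuclideanSpace ℝ (Fin 3),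
        0 < ‖Y‖ ^ 2 * Real.sqrt (m ^ 2 + ‖v‖ ^ 2) + ‖Y‖ * ⟪Y, v⟫) ∧
    (∀ v : EuclideanSpace ℝ (Fin 3), F v =
        (‖Y‖ ^ 2)⁻¹ • cross3 Y
          ((1 + ⟪(Real.sqrt (m ^ 2 + ‖v‖ ^ 2))⁻¹ • v, ‖Y‖⁻¹ • Y⟫)⁻¹ •
            ((Real.sqrt (m ^ 2 + ‖v‖ ^ 2))⁻¹ • v))) ∧
    Differentiable ℝ F ∧
    (∀ v : EuclideanSpace ℝ (Fin 3),
        ∑ i : Fin 3,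
          fderiv ℝ (fun u => F u i) v (EuclideanSpace.single i (1 : ℝ)) = 0) := by
  have hF' : F = fun u => (kernelDenom m Y u)⁻¹ • cross3 Y u := funext hF
  have hpos := kernelDenom_pos hm.ne' hY
  refine ⟨hpos, fun v => ?_, ?_, fun v => ?_⟩
  · rw [hF v, cross3_smul_right, cross3_smul_right, smul_smul, smul_smul]
    exact congrArg (· • cross3 Y v) (inv_kernelDenom_eq hm.ne' hY v)
  · rw [hF']
    exact (Differentiable.inv (fun u => (hasFDerivAt_kernelDenom hm.ne' u).differentiableAt)
      fun u => (hpos u).ne').smul (cross3CLM Y).differentiable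
  · rw [hF']
    exact divergence_inv_kernelDenom_smul_cross3 hm.ne' hY v
end
end
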